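/- Let F, G : A \to \mathbb{R} on a finite nonempty set A with softmax distributions \pi \propto exp(F), \tilde\pi \propto exp(G). If sup_a |F(a)-G(a)| \le \epsilon, then both KL divergences D_{KL}(\pi \| \tilde\pi) and D_{KL}(\tilde\pi \| \pi) are at most 3\epsilon. -/

import Mathlib

/-! Writing `Z_F = ∑ exp F`, one has `log (π a / π̃ a) = (F a - G a) + (log Z_G - log Z_F)`,
so `D_KL(π ‖ π̃) = 𝔼_π[F - G] + (log Z_G - log Z_F)`. The expectation is at most
`sup (F - G)`, and `Z_G ≤ exp (sup (G - F)) Z_F` bounds the log-partition gap, giving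
`D_KL(π ‖ π̃) ≤ 2ε ≤ 3ε`. -/

open Finset

noncomputable def softmax {A : Type*} [Fintype A] (F : A → ℝ) (a : A) : ℝ :=
  Real.exp (F a) / ∑ a', Real.exp (F a')

section
open Real

variable {A : Type*} [Fintype A] [Nonempty A]

lemma sum_exp_pos (F : A → ℝ) : 0 < ∑ a, exp (F a) :=
  sum_pos (fun a _ => exp_pos (F a)) univ_nonempty

lemma softmax_pos (F : A → ℝ) (a : A) : 0 < softmax F a :=
  div_pos (exp_pos (F a)) (sum_exp_pos F)

lemma sum_softmax (F : A → ℝ) : ∑ a, softmax F a = 1 := by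
  simp only [softmax, ← sum_div, div_self (sum_exp_pos F).ne']

lemma sum_softmax_mul_le {F f : A → ℝ} {c : ℝ} (hf : ∀ a, f a ≤ c) :
    ∑ a, softmax F a * f a ≤ c :=
  calc ∑ a, softmax F a * f a
      ≤ ∑ a, softmax F a * c :=
        sum_le_sum fun a _ => mul_le_mul_of_nonneg_left (hf a) (softmax_pos F a).le
    _ = c := by rw [← sum_mul, sum_softmax, one_mul]

lemma log_softmax_div_softmax (F G : A → ℝ) (a : A) :
    log (softmax F a / softmax G a) =
      F a - G a + (log (∑ a', exp (G a')) - log (∑ a', exp (F a'))) := by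
  rw [log_div (softmax_pos F a).ne' (softmax_pos G a).ne', softmax, softmax,
    log_div (exp_pos _).ne' (sum_exp_pos F).ne', log_div (exp_pos _).ne' (sum_exp_pos G).ne',
    log_exp, log_exp]
  ring

lemma log_sum_exp_sub_log_sum_exp_le {F G : A → ℝ} {δ : ℝ} (h : ∀ a, G a - F a ≤ δ) :
    log (∑ a, exp (G a)) - log (∑ a, exp (F a)) ≤ δ := by
  have hZ : ∑ a, exp (G a) ≤ exp δ * ∑ a, exp (F a) := by
    rw [mul_sum]
    refine sum_le_sum fun a _ => ?_
    rw [← exp_add, exp_le_exp]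
    linarith [h a]
  have := log_le_log (sum_exp_pos G) hZ
  rw [log_mul (exp_pos δ).ne' (sum_exp_pos F).ne', log_exp] at this
  linarith

theorem sum_softmax_mul_log_div_softmax_le {F G : A → ℝ} {δ₁ δ₂ : ℝ}
    (h₁ : ∀ a, F a - G a ≤ δ₁) (h₂ : ∀ a, G a - F a ≤ δ₂) :
    ∑ a, softmax F a * log (softmax F a / softmax G a) ≤ δ₁ + δ₂ :=
  calc ∑ a, softmax F a * log (softmax F a / softmax G a)
      = ∑ a, softmax F a * (F a - G a) +
          (log (∑ a, exp (G a)) - log (∑ a, exp (F a))) := by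
        simp only [log_softmax_div_softmax, mul_add, sum_add_distrib, ← sum_mul, sum_softmax,
          one_mul]
    _ ≤ δ₁ + δ₂ :=
        add_le_add (sum_softmax_mul_le h₁) (log_sum_exp_sub_log_sum_exp_le h₂)

end

theorem stmt_6 {A : Type*} [Fintype A] [Nonempty A] (F G : A → ℝ) (ε : ℝ)
    (hFG : ∀ a, |F a - G a| ≤ ε)
    (π πt : A → ℝ)
    (hπ : ∀ a, π a = Real.exp (F a) / ∑ a' : A, Real.exp (F a'))
    (hπt : ∀ a, πt a = Real.exp (G a) / ∑ a' : A, Real.exp (G a')) :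
    (∑ a : A, π a * Real.log (π a / πt a)) ≤ 3 * ε ∧
    (∑ a : A, πt a * Real.log (πt a / π a)) ≤ 3 * ε := by
  obtain rfl : π = softmax F := funext hπ
  obtain rfl : πt = softmax G := funext hπt
  have hε : 0 ≤ ε := (abs_nonneg _).trans (hFG (Classical.arbitrary A))
  have hFG' : ∀ a, F a - G a ≤ ε := fun a => (abs_le.mp (hFG a)).2
  have hGF : ∀ a, G a - F a ≤ ε := fun a => by linarith [(abs_le.mp (hFG a)).1]
  constructor
  · linarith [sum_softmax_mul_log_div_softmax_le hFG' hGF]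
  · linarith [sum_softmax_mul_log_div_softmax_le hGF hFG']
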